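/- With F of characteristic 2, 𝒢, d_{ij}, and I as above, for every ℓ > 0 the product ((y1,y2)+1)((y3,y4)+1)···((y_{2ℓ-1},y_{2ℓ})+1) = d_{12} d_{34} ··· d_{(2ℓ-1)(2ℓ)} does not belong to I. -/

import Mathlib

/-- The group commutator `(a,b) = a⁻¹ b⁻¹ a b`. -/
def gc {G : Type*} [Group G] (a b : G) : G := a⁻¹ * b⁻¹ * a * b

/-- The relations `yᵢ² = 1` and `((yᵢ,yⱼ),yₖ) = 1`. -/
def grpRels : Set (FreeGroup ℕ) :=
  (Set.range fun i => FreeGroup.of i ^ 2) ∪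
    {x | ∃ i j k, x = gc (gc (FreeGroup.of i) (FreeGroup.of j)) (FreeGroup.of k)}

/-- The group `𝒢` presented by `yᵢ² = 1`, `((yᵢ,yⱼ),yₖ) = 1`. -/
def GrpG : Type := PresentedGroup grpRels

instance : Group GrpG := by unfold GrpG; infer_instance

/-- The generator `yᵢ` of `𝒢`. -/
def yy (i : ℕ) : GrpG := PresentedGroup.of i

/-- `d_{ij} = (yᵢ,yⱼ) + 1` in the group algebra `F𝒢`. -/
noncomputable def dd (F : Type*) [Field F] (i j : ℕ) : MonoidAlgebra F GrpG :=
  MonoidAlgebra.of F GrpG (gc (yy i) (yy j)) + 1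

/-- The two-sided ideal `I` of `F𝒢` generated by all
`d_{i₁i₂} d_{i₃i₄} + d_{i₁i₃} d_{i₂i₄}`. -/
noncomputable def II (F : Type*) [Field F] : TwoSidedIdeal (MonoidAlgebra F GrpG) :=
  TwoSidedIdeal.span
    {x | ∃ i1 i2 i3 i4, x = dd F i1 i2 * dd F i3 i4 + dd F i1 i3 * dd F i2 i4}

/-!
Let `A` be a commutative `F`-algebra generated by square-zero elements `eᵢ` with
`e₁ e₂ ⋯ e₂ₗ ≠ 0` (polynomials modulo the squares of the variables), and let `Yᵢ` act on
functions `Finset ℕ → A` by `(Yᵢ f)(S) = (∏_{j ∈ S, j < i} (1 + eᵢ eⱼ)) f(S ∆ {i})`, i.e. by left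
multiplication with `tᵢ` in a twisted group algebra of `(ℤ/2)^(ℕ)` over `A`. Then `Yᵢ² = 1` and
`Yᵢ Yⱼ = (1 + eᵢ eⱼ) Yⱼ Yᵢ`, so the commutator of `Yᵢ` and `Yⱼ` is the central scalar `1 + eᵢ eⱼ`
and `yᵢ ↦ Yᵢ` represents `𝒢`. In characteristic 2 this sends `d_{ij}` to the scalar `eᵢ eⱼ`, hence
every generator of `I` to `2 e_a e_b e_c e_d = 0`, but `d₁₂ d₃₄ ⋯` to `e₁ e₂ ⋯ e₂ₗ ≠ 0`.
-/

open scoped symmDiff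

lemma gc_eq_one_of_commute {G : Type*} [Group G] {a b : G} (h : Commute a b) : gc a b = 1 := by
  rw [gc, mul_assoc, mul_assoc, h.eq]; group

lemma MonoidHom.map_gc {G H : Type*} [Group G] [Group H] (f : G →* H) (a b : G) :
    f (gc a b) = gc (f a) (f b) := by
  simp [gc]

lemma Finset.prod_symmDiff_singleton {α M : Type*} [DecidableEq α] [CommMonoid M] {f : α → M}
    {a : α} (ha : f a * f a = 1) (s : Finset α) :
    ∏ x ∈ s ∆ {a}, f x = (∏ x ∈ s, f x) * f a := by
  by_cases has : a ∈ s
  · rw [← Finset.mul_prod_erase s f has, mul_comm (f a), mul_assoc, ha, mul_one]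
    congr 1; ext x; by_cases hx : x = a <;> simp [Finset.mem_symmDiff, hx, has]
  · have : s ∆ {a} = insert a s := by
      ext x; by_cases hx : x = a <;> simp [Finset.mem_symmDiff, hx, has]
    rw [this, Finset.prod_insert has, mul_comm]

lemma Finset.prod_range_two_mul {M : Type*} [CommMonoid M] (f : ℕ → M) (n : ℕ) :
    ∏ i ∈ range (2 * n), f i = ∏ i ∈ range n, f (2 * i) * f (2 * i + 1) := by
  induction n with
  | zero => simp
  | succ n ih => rw [Nat.mul_succ, prod_range_succ, prod_range_succ, ih, prod_range_succ, mul_assoc]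

section TwistedShift

variable {A : Type*} [CommRing A]

structure IsCommutatorForm (u : ℕ → ℕ → A) : Prop where
  symm : ∀ i j, u i j = u j i
  mul_self : ∀ i j, u i j * u i j = 1
  diag : ∀ i, u i i = 1

variable (u : ℕ → ℕ → A)

def twistFactor (i : ℕ) (S : Finset ℕ) : A := ∏ j ∈ S with j < i, u i j

def twistedShift (i : ℕ) : Module.End A (Finset ℕ → A) where
  toFun f S := twistFactor u i S * f (S ∆ {i})
  map_add' f g := by ext S; simp [mul_add]
  map_smul' a f := by ext S; simp [mul_left_comm]

@[simp] lemma twistedShift_apply (i : ℕ) (f : Finset ℕ → A) (S : Finset ℕ) :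
    twistedShift u i f S = twistFactor u i S * f (S ∆ {i}) := rfl

variable {u}

lemma twistFactor_symmDiff_singleton (hu : ∀ i j, u i j * u i j = 1) (i j : ℕ) (S : Finset ℕ) :
    twistFactor u j (S ∆ {i}) = twistFactor u j S * if i < j then u j i else 1 := by
  have hfilter : (S ∆ {i}).filter (· < j) = S.filter (· < j) ∆ ({i} : Finset ℕ).filter (· < j) := by
    ext x; simp only [Finset.mem_filter, Finset.mem_symmDiff]; tauto
  unfold twistFactor
  rw [hfilter, Finset.filter_singleton]
  split_ifs with hij
  · exact Finset.prod_symmDiff_singleton (hu j i) _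
  · rw [← Finset.bot_eq_empty, symmDiff_bot, mul_one]

lemma twistFactor_mul_self (hu : ∀ i j, u i j * u i j = 1) (i : ℕ) (S : Finset ℕ) :
    twistFactor u i S * twistFactor u i S = 1 := by
  rw [twistFactor, ← Finset.prod_mul_distrib]
  exact Finset.prod_eq_one fun j _ => hu i j

lemma twistedShift_mul_self (hu : ∀ i j, u i j * u i j = 1) (i : ℕ) :
    twistedShift u i * twistedShift u i = 1 := by
  ext f S
  simp [twistFactor_symmDiff_singleton hu, ← mul_assoc, twistFactor_mul_self hu]

lemma twistedShift_mul_comm (hu : IsCommutatorForm u) (i j : ℕ) :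
    twistedShift u i * twistedShift u j =
      algebraMap A _ (u i j) * (twistedShift u j * twistedShift u i) := by
  ext f S
  simp only [Module.End.mul_apply, Module.algebraMap_end_apply, Pi.smul_apply, smul_eq_mul,
    twistedShift_apply, twistFactor_symmDiff_singleton hu.mul_self, symmDiff_right_comm S {i} {j}]
  rcases lt_trichotomy i j with hij | rfl | hij
  · simp only [if_pos hij, if_neg hij.not_gt, hu.symm j i]
    ring
  · simp only [lt_irrefl, if_false, hu.diag, one_mul]
  · simp only [if_pos hij, if_neg hij.not_gt]
    linear_combination
      -(twistFactor u i S * twistFactor u j S * f (S ∆ {j} ∆ {i})) * hu.mul_self i j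

lemma isCommutatorForm_one_add_mul [CharP A 2] {e : ℕ → A} (he : ∀ i, e i * e i = 0) :
    IsCommutatorForm fun i j => 1 + e i * e j where
  symm i j := by rw [mul_comm]
  mul_self i j := by rw [CharTwo.add_mul_self, mul_mul_mul_comm, he, zero_mul, mul_one, add_zero]
  diag i := by rw [he, add_zero]

end TwistedShift

namespace GrpG

variable {A : Type*} [CommRing A] {u : ℕ → ℕ → A}

def twistedShiftUnit (hu : IsCommutatorForm u) (i : ℕ) : (Module.End A (Finset ℕ → A))ˣ :=
  ⟨twistedShift u i, twistedShift u i, twistedShift_mul_self hu.mul_self i,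
    twistedShift_mul_self hu.mul_self i⟩

lemma val_gc_twistedShiftUnit (hu : IsCommutatorForm u) (i j : ℕ) :
    ((gc (twistedShiftUnit hu i) (twistedShiftUnit hu j) : (Module.End A (Finset ℕ → A))ˣ) :
      Module.End A (Finset ℕ → A)) =
      algebraMap A _ (u i j) := by
  change twistedShift u i * twistedShift u j * twistedShift u i * twistedShift u j = _
  rw [twistedShift_mul_comm hu i j, mul_assoc, mul_assoc, mul_assoc,
    ← mul_assoc (twistedShift u i), twistedShift_mul_self hu.mul_self, one_mul,
    twistedShift_mul_self hu.mul_self, mul_one]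

lemma twistedShiftUnit_rels (hu : IsCommutatorForm u) :
    ∀ r ∈ grpRels, FreeGroup.lift (twistedShiftUnit hu) r = 1 := by
  rintro r (⟨i, rfl⟩ | ⟨i, j, k, rfl⟩)
  · rw [map_pow, FreeGroup.lift_apply_of, sq]
    exact Units.ext (twistedShift_mul_self hu.mul_self i)
  · simp only [MonoidHom.map_gc, FreeGroup.lift_apply_of]
    refine gc_eq_one_of_commute (Units.ext ?_)
    simp only [Units.val_mul, val_gc_twistedShiftUnit]
    exact Algebra.commutes _ _

noncomputable def twistedRep (hu : IsCommutatorForm u) : GrpG →* (Module.End A (Finset ℕ → A))ˣ :=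
  PresentedGroup.toGroup (twistedShiftUnit_rels hu)

lemma twistedRep_yy (hu : IsCommutatorForm u) (i : ℕ) :
    twistedRep hu (yy i) = twistedShiftUnit hu i :=
  PresentedGroup.toGroup.of _

noncomputable def twistedRepAlg (F : Type*) [CommSemiring F] [Algebra F A]
    (hu : IsCommutatorForm u) :
    MonoidAlgebra F GrpG →ₐ[F] Module.End A (Finset ℕ → A) :=
  MonoidAlgebra.lift F _ GrpG ((Units.coeHom _).comp (twistedRep hu))

variable (F : Type*) [Field F] [Algebra F A]

lemma twistedRepAlg_dd (hu : IsCommutatorForm u) (i j : ℕ) :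
    twistedRepAlg F hu (dd F i j) = algebraMap A _ (u i j + 1) := by
  rw [dd, map_add, map_one, twistedRepAlg, MonoidAlgebra.lift_of, MonoidHom.comp_apply,
    MonoidHom.map_gc, twistedRep_yy, twistedRep_yy, Units.coeHom_apply, val_gc_twistedShiftUnit,
    map_add, map_one]

lemma II_le_ker_twistedRepAlg (hu : IsCommutatorForm u)
    (hrel : ∀ a b c d, (u a b + 1) * (u c d + 1) + (u a c + 1) * (u b d + 1) = 0) :
    II F ≤ TwoSidedIdeal.ker (twistedRepAlg F hu) := by
  refine TwoSidedIdeal.span_le.mpr ?_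
  rintro _ ⟨a, b, c, d, rfl⟩
  rw [SetLike.mem_coe, TwoSidedIdeal.mem_ker, map_add, map_mul, map_mul]
  simp only [twistedRepAlg_dd, ← map_mul, ← map_add, hrel, map_zero]

theorem prod_ofFn_dd_not_mem_II [CharP A 2] {e : ℕ → A} (he : ∀ i, e i * e i = 0) {n : ℕ}
    (a b : Fin n → ℕ) (hne : ∏ s, e (a s) * e (b s) ≠ 0) :
    (List.ofFn fun s => dd F (a s) (b s)).prod ∉ II F := by
  have hu := isCommutatorForm_one_add_mul he
  have hu_add_one : ∀ i j, (1 + e i * e j) + 1 = e i * e j := fun i j => by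
    rw [add_comm, ← add_assoc, CharTwo.add_self_eq_zero, zero_add]
  have hrel : ∀ a b c d, (1 + e a * e b + 1) * (1 + e c * e d + 1) +
      (1 + e a * e c + 1) * (1 + e b * e d + 1) = 0 := fun a b c d => by
    simp only [hu_add_one]
    rw [mul_mul_mul_comm, mul_right_comm (e a), CharTwo.add_self_eq_zero]
  have hΦ : twistedRepAlg F hu (List.ofFn fun s => dd F (a s) (b s)).prod =
      algebraMap A _ (∏ s, e (a s) * e (b s)) := by
    rw [map_list_prod, List.map_ofFn, ← List.prod_ofFn, map_list_prod, List.map_ofFn]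
    simp only [Function.comp_def, twistedRepAlg_dd, hu_add_one]
  intro hmem
  have hker := II_le_ker_twistedRepAlg F hu hrel hmem
  rw [TwoSidedIdeal.mem_ker, hΦ] at hker
  have := congrFun (LinearMap.congr_fun hker fun _ => (1 : A)) ∅
  rw [Module.algebraMap_end_apply, Pi.smul_apply, smul_eq_mul, mul_one] at this
  exact hne this

end GrpG

section SquareZeroGenerators

open MvPolynomial

variable (σ R : Type*) [CommRing R]

abbrev SqZeroMvPolynomial : Type _ :=
  MvPolynomial σ R ⧸ Ideal.span (Set.range fun i : σ => (X i : MvPolynomial σ R) ^ 2)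

variable {σ R}

noncomputable def sqZeroGen (i : σ) : SqZeroMvPolynomial σ R := Ideal.Quotient.mk _ (X i)

lemma sqZeroGen_mul_self (i : σ) : sqZeroGen (R := R) i * sqZeroGen i = 0 := by
  rw [sqZeroGen, ← map_mul, Ideal.Quotient.eq_zero_iff_mem, ← sq]
  exact Ideal.subset_span ⟨i, rfl⟩

lemma prod_sqZeroGen_ne_zero [Nontrivial R] (s : Finset σ) :
    ∏ i ∈ s, sqZeroGen (R := R) i ≠ 0 := by
  classical
  have hspan : Set.range (fun i : σ => (X i : MvPolynomial σ R) ^ 2) =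
      (fun m => monomial m 1) '' Set.range fun i => Finsupp.single i 2 := by
    rw [← Set.range_comp]; simp only [Function.comp_def, X_pow_eq_monomial]
  have hprod : ∏ i ∈ s, (X i : MvPolynomial σ R) = monomial (∑ i ∈ s, Finsupp.single i 1) 1 := by
    rw [monomial_sum_one]; rfl
  unfold sqZeroGen
  rw [← map_prod, Ne, Ideal.Quotient.eq_zero_iff_mem, hspan, hprod,
    mem_ideal_span_monomial_image, support_monomial, if_neg one_ne_zero]
  intro h
  obtain ⟨_, ⟨k, rfl⟩, hk⟩ := h _ (Finset.mem_singleton_self _)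
  have := hk k
  rw [Finsupp.single_eq_same, Finsupp.finsetSum_apply] at this
  simp only [Finsupp.single_apply, Finset.sum_ite_eq'] at this
  split_ifs at this <;> omega

instance [Nontrivial R] : Nontrivial (SqZeroMvPolynomial σ R) :=
  nontrivial_of_ne 1 0 (by simpa using prod_sqZeroGen_ne_zero (σ := σ) (R := R) ∅)

instance {F : Type*} [Field F] (p : ℕ) [CharP F p] : CharP (SqZeroMvPolynomial σ F) p :=
  charP_of_injective_algebraMap' F p

end SquareZeroGenerators

theorem groupAlgebra_prod_d_not_mem_ideal_general
    (F : Type*) [Field F] [CharP F 2] (ℓ : ℕ) :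
    (List.ofFn fun s : Fin ℓ => dd F (2 * s + 1) (2 * s + 2)).prod ∉ II F := by
  have hne := prod_sqZeroGen_ne_zero (R := F) ((Finset.range (2 * ℓ)).map (addRightEmbedding 1))
  rw [Finset.prod_map, Finset.prod_range_two_mul] at hne
  exact GrpG.prod_ofFn_dd_not_mem_II F sqZeroGen_mul_self (fun s => 2 * s + 1) (fun s => 2 * s + 2)
    ((Fin.prod_univ_eq_prod_range _ ℓ).trans_ne hne)

/-- over a field of characteristic 2, for every `ℓ > 0` the product
`d_{12} d_{34} ⋯ d_{(2ℓ-1)(2ℓ)} = ((y₁,y₂)+1) ⋯ ((y_{2ℓ-1},y_{2ℓ})+1)` does not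
belong to `I`. -/
theorem groupAlgebra_prod_d_not_mem_ideal
    (F : Type*) [Field F] [CharP F 2] (ℓ : ℕ) (hℓ : 0 < ℓ) :
    (List.ofFn fun s : Fin ℓ => dd F (2 * s + 1) (2 * s + 2)).prod ∉ II F :=
  groupAlgebra_prod_d_not_mem_ideal_general F ℓ
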